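/- arXiv:1904.08219 — 3 statements merged into one kernel-verified Lean document; each statement's English description precedes it below -/
import Mathlib

section
/- For positive integers n, k with k ≥ 2, and an integer vector s = (s_1, ..., s_k) with s_i ≥ 2 for i ≠ k, s_k ∈ {1,2}, and n ≥ s_1 + ... + s_{k-1} + 2, the map c sending an s-stable k-subset A of [n] to min(min A, n - (s_1 + ... + s_{k-1})) is a proper coloring of the s-stable Kneser graph KG(n,k)_{s-stab} with n - (s_1 + ... + s_{k-1}) colors. -/
/-- The `j`-th smallest element (0-indexed) of a finite set of naturals (default `0`). -/
def sortedNth (A : Finset ℕ) (j : ℕ) : ℕ := (A.sort (· ≤ ·)).getD j 0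

/-- `A` is an `s`-stable `k`-subset of `[n] = {1,…,n}`: writing `A(0) < A(1) < ⋯ < A(k-1)`
for its elements, `A(j+1) - A(j) ≥ s j` for `j + 1 < k`, and `A(k-1) - A(0) ≤ n - s (k-1)`
(formulated additively to avoid truncated subtraction). -/
def VecStable (n k : ℕ) (s : ℕ → ℕ) (A : Finset ℕ) : Prop :=
  A ⊆ Finset.Icc 1 n ∧ A.card = k ∧
    (∀ j, j + 1 < k → sortedNth A j + s j ≤ sortedNth A (j + 1)) ∧
    sortedNth A (k - 1) + s (k - 1) ≤ sortedNth A 0 + n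

/-- The `s`-stable Kneser graph `KG(n,k)_{s-stab}`: vertices are the `s`-stable
`k`-subsets of `[n]`, adjacent iff disjoint. -/
def stableKneser (n k : ℕ) (s : ℕ → ℕ) :
    SimpleGraph {A : Finset ℕ // VecStable n k s A} where
  Adj X Y := X ≠ Y ∧ Disjoint X.1 Y.1
  symm := ⟨fun _ _ h => ⟨h.1.symm, h.2.symm⟩⟩
  loopless := ⟨fun _ h => h.1 rfl⟩

/-- The set `U = {1, s₁+1, s₁+s₂+1, …}` (the `j`-th element is `s₁+⋯+s_j + 1`). -/
def Uset (k : ℕ) (s : ℕ → ℕ) : Finset ℕ :=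
  (Finset.range k).image (fun j => (∑ i ∈ Finset.range j, s i) + 1)

/-- The set `V = {2, s₁+2, s₁+s₂+2, …}`. -/
def Vset (k : ℕ) (s : ℕ → ℕ) : Finset ℕ :=
  (Finset.range k).image (fun j => (∑ i ∈ Finset.range j, s i) + 2)

/-! The gap conditions give `min A + (s₁ + ⋯ + s_{k-1}) ≤ max A ≤ n`, so the cap
`n - (s₁ + ⋯ + s_{k-1})` never applies and the colour of `A` is `min A ∈ A`; disjoint sets have
distinct minima. -/

lemma sortedNth_mem {A : Finset ℕ} {j : ℕ} (hj : j < A.card) : sortedNth A j ∈ A := by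
  have hj' : j < (A.sort (· ≤ ·)).length := by rwa [Finset.length_sort]
  rw [sortedNth, List.getD_eq_getElem _ _ hj']
  exact (Finset.mem_sort _).mp (List.getElem_mem hj')

namespace VecStable

variable {n k : ℕ} {s : ℕ → ℕ} {A : Finset ℕ}

theorem sortedNth_zero_add_sum_le (hA : VecStable n k s A) {j : ℕ} (hj : j < k) :
    sortedNth A 0 + ∑ i ∈ Finset.range j, s i ≤ sortedNth A j := by
  induction j with
  | zero => simp
  | succ m ih =>
    rw [Finset.sum_range_succ]
    have := hA.2.2.1 m hj
    have := ih (by omega)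
    omega

theorem sortedNth_zero_mem (hA : VecStable n k s A) (hk : 0 < k) : sortedNth A 0 ∈ A :=
  sortedNth_mem (hA.2.1 ▸ hk)

theorem one_le_sortedNth_zero (hA : VecStable n k s A) (hk : 0 < k) : 1 ≤ sortedNth A 0 :=
  (Finset.mem_Icc.mp (hA.1 (hA.sortedNth_zero_mem hk))).1

theorem sortedNth_zero_le_sub_sum (hA : VecStable n k s A) (hk : 0 < k) :
    sortedNth A 0 ≤ n - ∑ i ∈ Finset.range (k - 1), s i := by
  have hlast : sortedNth A (k - 1) ≤ n :=
    (Finset.mem_Icc.mp (hA.1 (sortedNth_mem (by rw [hA.2.1]; omega)))).2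
  have := hA.sortedNth_zero_add_sum_le (j := k - 1) (by omega)
  omega

end VecStable

theorem stmt0_general (n k : ℕ) (s : ℕ → ℕ) (hk : 2 ≤ k) :
    (∀ A : Finset ℕ, VecStable n k s A →
      min (sortedNth A 0) (n - ∑ i ∈ Finset.range (k - 1), s i) ∈
        Finset.Icc 1 (n - ∑ i ∈ Finset.range (k - 1), s i)) ∧
    (∀ A B : Finset ℕ, VecStable n k s A → VecStable n k s B →
      Disjoint A B → A ≠ B →
      min (sortedNth A 0) (n - ∑ i ∈ Finset.range (k - 1), s i) ≠
        min (sortedNth B 0) (n - ∑ i ∈ Finset.range (k - 1), s i)) := by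
  have hk0 : 0 < k := by omega
  have color_eq {A : Finset ℕ} (hA : VecStable n k s A) :
      min (sortedNth A 0) (n - ∑ i ∈ Finset.range (k - 1), s i) = sortedNth A 0 :=
    min_eq_left (hA.sortedNth_zero_le_sub_sum hk0)
  refine ⟨fun A hA => ?_, fun A B hA hB hAB _ hcol => ?_⟩
  · rw [color_eq hA, Finset.mem_Icc]
    exact ⟨hA.one_le_sortedNth_zero hk0, hA.sortedNth_zero_le_sub_sum hk0⟩
  · rw [color_eq hA, color_eq hB] at hcol
    exact Finset.disjoint_left.mp hAB (hA.sortedNth_zero_mem hk0)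
      (hcol ▸ hB.sortedNth_zero_mem hk0)

/-- the map `c(A) = min(min A, n - (s₁+⋯+s_{k-1}))` is a proper coloring of
`KG(n,k)_{s-stab}` with `n - (s₁+⋯+s_{k-1})` colors. -/
theorem stmt0 (n k : ℕ) (s : ℕ → ℕ) (hk : 2 ≤ k)
    (hs : ∀ i, i + 1 < k → 2 ≤ s i) (hsk : s (k - 1) = 1 ∨ s (k - 1) = 2)
    (hn : (∑ i ∈ Finset.range (k - 1), s i) + 2 ≤ n) :
    (∀ A : Finset ℕ, VecStable n k s A →
      min (sortedNth A 0) (n - ∑ i ∈ Finset.range (k - 1), s i) ∈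
        Finset.Icc 1 (n - ∑ i ∈ Finset.range (k - 1), s i)) ∧
    (∀ A B : Finset ℕ, VecStable n k s A → VecStable n k s B →
      Disjoint A B → A ≠ B →
      min (sortedNth A 0) (n - ∑ i ∈ Finset.range (k - 1), s i) ≠
        min (sortedNth B 0) (n - ∑ i ∈ Finset.range (k - 1), s i)) :=
  stmt0_general n k s hk
end

section
/- Let n, k be positive integers and s⃗ = (s_1,...,s_k) a positive integer vector. Define P(n,k,s⃗) as the poset of pairs (A,B) of disjoint subsets of [n] each containing an s⃗-stable k-subset, ordered componentwise by inclusion, and define Hom_p(K_2, G) for G = KG(n,k)_{s⃗-stab} as the poset of pairs (𝒜,ℬ) of nonempty disjoint sets of vertices with every vertex of 𝒜 adjacent to every vertex of ℬ. Then the maps φ(𝒜,ℬ) = (∪𝒜, ∪ℬ) and ψ(A,B) = ({s⃗-stable k-subsets of A}, {s⃗-stable k-subsets of B}) are well-defined order-preserving maps between these posets, with ψ∘φ ≥ id and φ∘ψ ≤ id pointwise. -/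
/-- Membership in the poset `P(n,k,s⃗)`: pairs `(A,B)` of disjoint subsets of `[n]`,
each containing an `s⃗`-stable `k`-subset. -/
def Ppred (n k : ℕ) (s : ℕ → ℕ) (A B : Finset ℕ) : Prop :=
  A ⊆ Finset.Icc 1 n ∧ B ⊆ Finset.Icc 1 n ∧ Disjoint A B ∧
    (∃ C ⊆ A, VecStable n k s C) ∧ (∃ C ⊆ B, VecStable n k s C)

/-- Membership in the poset `Hom_p(K₂, KG(n,k)_{s⃗-stab})`: pairs `(𝒜,ℬ)` of nonempty
families of `s⃗`-stable `k`-subsets such that every member of `𝒜` is adjacent (i.e.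
disjoint and distinct) to every member of `ℬ`. -/
def Hpred (n k : ℕ) (s : ℕ → ℕ) (F G : Finset (Finset ℕ)) : Prop :=
  F.Nonempty ∧ G.Nonempty ∧ (∀ X ∈ F, VecStable n k s X) ∧ (∀ Y ∈ G, VecStable n k s Y) ∧
    ∀ X ∈ F, ∀ Y ∈ G, X ≠ Y ∧ Disjoint X Y

open Classical in
/-- The family of all `s⃗`-stable `k`-subsets of `A`. -/
noncomputable def stableSubsets (n k : ℕ) (s : ℕ → ℕ) (A : Finset ℕ) : Finset (Finset ℕ) :=
  A.powerset.filter (VecStable n k s)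

namespace StableKneser

open Finset

variable {n k : ℕ} {s : ℕ → ℕ}

theorem mem_stableSubsets {A X : Finset ℕ} :
    X ∈ stableSubsets n k s A ↔ X ⊆ A ∧ VecStable n k s X := by
  simp only [stableSubsets, mem_filter, mem_powerset]

theorem VecStable.nonempty (hk : 0 < k) {X : Finset ℕ} (hX : VecStable n k s X) :
    X.Nonempty := by
  rw [← card_pos, hX.2.1]
  exact hk

theorem stableSubsets_mono {A A' : Finset ℕ} (h : A ⊆ A') :
    stableSubsets n k s A ⊆ stableSubsets n k s A' := fun _ hX =>
  mem_stableSubsets.2 ⟨(mem_stableSubsets.1 hX).1.trans h, (mem_stableSubsets.1 hX).2⟩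

theorem biUnion_stableSubsets_subset (A : Finset ℕ) :
    (stableSubsets n k s A).biUnion id ⊆ A :=
  biUnion_subset.2 fun _ hX => (mem_stableSubsets.1 hX).1

theorem subset_stableSubsets_biUnion {F : Finset (Finset ℕ)}
    (hF : ∀ X ∈ F, VecStable n k s X) : F ⊆ stableSubsets n k s (F.biUnion id) := fun X hX =>
  mem_stableSubsets.2 ⟨subset_biUnion_of_mem id hX, hF X hX⟩

theorem biUnion_subset_Icc {F : Finset (Finset ℕ)} (hF : ∀ X ∈ F, VecStable n k s X) :
    F.biUnion id ⊆ Icc 1 n :=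
  biUnion_subset.2 fun X hX => (hF X hX).1

theorem exists_stable_subset_biUnion {F : Finset (Finset ℕ)} (hne : F.Nonempty)
    (hF : ∀ X ∈ F, VecStable n k s X) : ∃ C ⊆ F.biUnion id, VecStable n k s C :=
  let ⟨X, hX⟩ := hne
  ⟨X, subset_biUnion_of_mem id hX, hF X hX⟩

theorem Hpred.ppred_biUnion {F G : Finset (Finset ℕ)} (h : Hpred n k s F G) :
    Ppred n k s (F.biUnion id) (G.biUnion id) := by
  obtain ⟨hFne, hGne, hF, hG, hadj⟩ := h
  have hdisj : Disjoint (F.biUnion id) (G.biUnion id) :=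
    (disjoint_biUnion_left _ _ _).2 fun X hX =>
      (disjoint_biUnion_right _ _ _).2 fun Y hY => (hadj X hX Y hY).2
  exact ⟨biUnion_subset_Icc hF, biUnion_subset_Icc hG, hdisj,
    exists_stable_subset_biUnion hFne hF, exists_stable_subset_biUnion hGne hG⟩

/-- Stable sets are nonempty, so two disjoint ones are automatically distinct. -/
theorem Ppred.hpred_stableSubsets (hk : 0 < k) {A B : Finset ℕ} (h : Ppred n k s A B) :
    Hpred n k s (stableSubsets n k s A) (stableSubsets n k s B) := by
  obtain ⟨-, -, hAB, ⟨C, hCA, hC⟩, ⟨D, hDB, hD⟩⟩ := h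
  refine ⟨⟨C, mem_stableSubsets.2 ⟨hCA, hC⟩⟩, ⟨D, mem_stableSubsets.2 ⟨hDB, hD⟩⟩,
    fun X hX => (mem_stableSubsets.1 hX).2, fun Y hY => (mem_stableSubsets.1 hY).2, ?_⟩
  intro X hX Y hY
  obtain ⟨hXA, hXs⟩ := mem_stableSubsets.1 hX
  have hXY : Disjoint X Y := hAB.mono hXA (mem_stableSubsets.1 hY).1
  refine ⟨fun hEq => ?_, hXY⟩
  subst hEq
  exact (VecStable.nonempty hk hXs).ne_empty (disjoint_self.1 hXY)

end StableKneser

open StableKneser Finset in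
theorem stmt10_general (n k : ℕ) (s : ℕ → ℕ) (hk : 1 ≤ k) :
    (∀ F G : Finset (Finset ℕ), Hpred n k s F G →
      Ppred n k s (F.biUnion id) (G.biUnion id)) ∧
    (∀ A B : Finset ℕ, Ppred n k s A B →
      Hpred n k s (stableSubsets n k s A) (stableSubsets n k s B)) ∧
    (∀ F G F' G' : Finset (Finset ℕ), Hpred n k s F G → Hpred n k s F' G' →
      F ⊆ F' → G ⊆ G' → F.biUnion id ⊆ F'.biUnion id ∧ G.biUnion id ⊆ G'.biUnion id) ∧
    (∀ A B A' B' : Finset ℕ, Ppred n k s A B → Ppred n k s A' B' → A ⊆ A' → B ⊆ B' →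
      stableSubsets n k s A ⊆ stableSubsets n k s A' ∧
      stableSubsets n k s B ⊆ stableSubsets n k s B') ∧
    (∀ F G : Finset (Finset ℕ), Hpred n k s F G →
      F ⊆ stableSubsets n k s (F.biUnion id) ∧ G ⊆ stableSubsets n k s (G.biUnion id)) ∧
    (∀ A B : Finset ℕ, Ppred n k s A B →
      (stableSubsets n k s A).biUnion id ⊆ A ∧ (stableSubsets n k s B).biUnion id ⊆ B) :=
  ⟨fun _ _ h => h.ppred_biUnion,
    fun _ _ h => h.hpred_stableSubsets hk,
    fun _ _ _ _ _ _ hF hG =>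
      ⟨biUnion_subset_biUnion_of_subset_left id hF, biUnion_subset_biUnion_of_subset_left id hG⟩,
    fun _ _ _ _ _ _ hA hB => ⟨stableSubsets_mono hA, stableSubsets_mono hB⟩,
    fun _ _ h => ⟨subset_stableSubsets_biUnion h.2.2.1, subset_stableSubsets_biUnion h.2.2.2.1⟩,
    fun A B _ => ⟨biUnion_stableSubsets_subset A, biUnion_stableSubsets_subset B⟩⟩

/-- `φ(𝒜,ℬ) = (⋃𝒜, ⋃ℬ)` and `ψ(A,B) = (stable subsets of A, stable
subsets of B)` are well-defined order-preserving maps between `Hom_p(K₂,KG(n,k)_{s⃗-stab})`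
and `P(n,k,s⃗)`, with `ψ∘φ ≥ id` and `φ∘ψ ≤ id` pointwise. -/
theorem stmt10 (n k : ℕ) (s : ℕ → ℕ) (hn : 1 ≤ n) (hk : 1 ≤ k)
    (hs : ∀ i, i < k → 1 ≤ s i) :
    (∀ F G : Finset (Finset ℕ), Hpred n k s F G →
      Ppred n k s (F.biUnion id) (G.biUnion id)) ∧
    (∀ A B : Finset ℕ, Ppred n k s A B →
      Hpred n k s (stableSubsets n k s A) (stableSubsets n k s B)) ∧
    (∀ F G F' G' : Finset (Finset ℕ), Hpred n k s F G → Hpred n k s F' G' →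
      F ⊆ F' → G ⊆ G' → F.biUnion id ⊆ F'.biUnion id ∧ G.biUnion id ⊆ G'.biUnion id) ∧
    (∀ A B A' B' : Finset ℕ, Ppred n k s A B → Ppred n k s A' B' → A ⊆ A' → B ⊆ B' →
      stableSubsets n k s A ⊆ stableSubsets n k s A' ∧
      stableSubsets n k s B ⊆ stableSubsets n k s B') ∧
    (∀ F G : Finset (Finset ℕ), Hpred n k s F G →
      F ⊆ stableSubsets n k s (F.biUnion id) ∧ G ⊆ stableSubsets n k s (G.biUnion id)) ∧
    (∀ A B : Finset ℕ, Ppred n k s A B →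
      (stableSubsets n k s A).biUnion id ⊆ A ∧ (stableSubsets n k s B).biUnion id ⊆ B) :=
  stmt10_general n k s hk
end

section
/- Let P be a finite poset and ψ : P → P an order-preserving map with ψ(x) ≥ x for all x (an increasing operator). Then the order complex of P is homotopy equivalent to the order complex of the image of ψ. -/
open Function

/-- The geometric realization of the order complex `Δ(P)` of a preorder `P`, realized
inside `P → ℝ`: convex combinations of points of `P` whose support is a chain. -/
def orderComplex (P : Type*) [Preorder P] : Set (P → ℝ) :=
  {x | (∀ p, 0 ≤ x p) ∧ (support x).Finite ∧ ∑ᶠ p, x p = 1 ∧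
    IsChain (· ≤ ·) (support x)}

/-!
A monotone map `θ : P → Q` acts on `Δ(P)` by pushing weights forward, `x ↦ θ_* x`, and this
action is functorial. If `ι : range ψ → P` is the inclusion and `ψ' : P → range ψ` the
corestriction, then `ι ∘ ψ' = ψ` and `ψ' ∘ ι = ψ|_{range ψ}` are both increasing, so it suffices
to show that `ψ_*` is homotopic to the identity whenever `ψ` is monotone and `p ≤ ψ p`.

The straight-line homotopy from `x` to `ψ_* x` fails: for `a < b` in the support of `x`, the
points `ψ a` and `b` need not be comparable. Instead, at time `t` the mass of `x` is moved from
`p` to `ψ p` from the top of the chain downwards, one unit of mass per unit of time. Then every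
point still carrying unconverted mass lies below every point whose mass has started to move, so
the support stays a chain because `p ≤ ψ p`.
-/

namespace OrderComplex

open Finset

open Classical in
noncomputable def push {P Q : Type*} [Fintype P] (θ : P → Q) (x : P → ℝ) : Q → ℝ :=
  fun q => ∑ p with θ p = q, x p

section Push

variable {P Q : Type*} [Fintype P]

lemma push_nonneg (θ : P → Q) {x : P → ℝ} (hx : ∀ p, 0 ≤ x p) (q : Q) : 0 ≤ push θ x q :=
  sum_nonneg fun p _ => hx p

lemma sum_push [Fintype Q] (θ : P → Q) (x : P → ℝ) : ∑ q, push θ x q = ∑ p, x p := by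
  classical exact sum_fiberwise _ _ _

lemma support_push_subset (θ : P → Q) (x : P → ℝ) : support (push θ x) ⊆ θ '' support x := by
  classical
  intro q hq
  obtain ⟨p, hp, hxp⟩ := exists_ne_zero_of_sum_ne_zero hq
  exact ⟨p, hxp, (mem_filter.mp hp).2⟩

lemma push_comp {R : Type*} [Fintype Q] (θ₁ : P → Q) (θ₂ : Q → R) (x : P → ℝ) :
    push (θ₂ ∘ θ₁) x = push θ₂ (push θ₁ x) := by
  classical
  funext r
  simp only [push]
  rw [sum_fiberwise_eq_sum_filter univ {q | θ₂ q = r} θ₁ x]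
  simp

lemma continuous_push (θ : P → Q) : Continuous (push θ) :=
  continuous_pi fun _ => continuous_finsetSum _ fun p _ => continuous_apply p

end Push

section Map

variable {P Q : Type*} [Preorder P] [Preorder Q] [Fintype P]

lemma mem_orderComplex_iff {x : P → ℝ} :
    x ∈ orderComplex P ↔ (∀ p, 0 ≤ x p) ∧ ∑ p, x p = 1 ∧ IsChain (· ≤ ·) (support x) := by
  simp [orderComplex, Set.toFinite, finsum_eq_sum_of_fintype]

lemma push_mem_orderComplex [Fintype Q] {θ : P → Q} (hθ : Monotone θ) {x : P → ℝ}
    (hx : x ∈ orderComplex P) : push θ x ∈ orderComplex Q := by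
  obtain ⟨h0, h1, hc⟩ := mem_orderComplex_iff.mp hx
  exact mem_orderComplex_iff.mpr ⟨push_nonneg θ h0, by rw [sum_push, h1],
    (hθ.isChain_image hc).mono (support_push_subset θ x)⟩

variable [Fintype Q]

noncomputable def pushMap (θ : P →o Q) : C(orderComplex P, orderComplex Q) where
  toFun x := ⟨push θ x, push_mem_orderComplex θ.monotone x.2⟩
  continuous_toFun := ((continuous_push θ).comp continuous_subtype_val).subtype_mk _

lemma pushMap_comp {R : Type*} [Preorder R] [Fintype R] (θ₁ : P →o Q) (θ₂ : Q →o R) :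
    (pushMap θ₂).comp (pushMap θ₁) = pushMap (θ₂.comp θ₁) :=
  ContinuousMap.ext fun x => Subtype.ext (push_comp θ₁ θ₂ x.1).symm

end Map

section Homotopy

variable {P : Type*} [PartialOrder P] [Fintype P]

open Classical in
noncomputable def massAbove (x : P → ℝ) (p : P) : ℝ :=
  ∑ q with p < q, x q

noncomputable def convertedMass (x : P → ℝ) (t : ℝ) (p : P) : ℝ :=
  min (x p) (max 0 (t - massAbove x p))

noncomputable def partialPush (ψ : P → P) (x : P → ℝ) (t : ℝ) : P → ℝ :=
  x - convertedMass x t + push ψ (convertedMass x t)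

open Classical in
lemma massAbove_add_self (x : P → ℝ) (p : P) :
    massAbove x p + x p = ∑ q with p ≤ q, x q := by
  have h : univ.filter (p ≤ ·) = insert p (univ.filter (p < ·)) := by
    ext q
    simp [le_iff_eq_or_lt, eq_comm]
  rw [h, sum_insert (by simp), add_comm]
  rfl

variable {x : P → ℝ}

lemma massAbove_add_self_le_of_lt (h0 : ∀ p, 0 ≤ x p) {p p' : P} (hp : p < p') :
    massAbove x p' + x p' ≤ massAbove x p := by
  rw [massAbove_add_self]
  refine sum_le_sum_of_subset_of_nonneg (fun q hq => ?_) fun q _ _ => h0 q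
  simp only [mem_filter, mem_univ, true_and] at hq ⊢
  exact hp.trans_le hq

lemma massAbove_add_self_le_sum (h0 : ∀ p, 0 ≤ x p) (p : P) :
    massAbove x p + x p ≤ ∑ q, x q := by
  rw [massAbove_add_self]
  exact sum_le_sum_of_subset_of_nonneg (subset_univ _) fun q _ _ => h0 q

lemma massAbove_nonneg (h0 : ∀ p, 0 ≤ x p) (p : P) : 0 ≤ massAbove x p :=
  sum_nonneg fun q _ => h0 q

lemma convertedMass_nonneg (h0 : ∀ p, 0 ≤ x p) (t : ℝ) (p : P) : 0 ≤ convertedMass x t p :=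
  le_min (h0 p) (le_max_left _ _)

lemma convertedMass_le (t : ℝ) (p : P) : convertedMass x t p ≤ x p :=
  min_le_left _ _

lemma convertedMass_eq_zero_of_lt (h0 : ∀ p, 0 ≤ x p) {t : ℝ} {p p' : P} (hp : p < p')
    (h : convertedMass x t p' < x p') : convertedMass x t p = 0 := by
  have hlt : t - massAbove x p' < x p' := by
    by_contra! hle
    exact h.ne (min_eq_left (hle.trans (le_max_right _ _)))
  have hle : t - massAbove x p ≤ 0 := by linarith [massAbove_add_self_le_of_lt h0 hp]
  simp [convertedMass, max_eq_left hle, h0 p]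

lemma convertedMass_zero (h0 : ∀ p, 0 ≤ x p) : convertedMass x 0 = 0 := by
  funext p
  have hle : -massAbove x p ≤ 0 := neg_nonpos.mpr (massAbove_nonneg h0 p)
  simp [convertedMass, max_eq_left hle, h0 p]

lemma convertedMass_one (h0 : ∀ p, 0 ≤ x p) (h1 : ∑ p, x p = 1) : convertedMass x 1 = x := by
  funext p
  have hle : x p ≤ 1 - massAbove x p := by linarith [massAbove_add_self_le_sum h0 p]
  exact min_eq_left (hle.trans (le_max_right _ _))

lemma support_convertedMass_subset (h0 : ∀ p, 0 ≤ x p) (t : ℝ) :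
    support (convertedMass x t) ⊆ support x := fun p hp hxp =>
  hp (le_antisymm (hxp ▸ convertedMass_le t p) (convertedMass_nonneg h0 t p))

lemma le_of_convertedMass_lt_of_ne_zero (h0 : ∀ p, 0 ≤ x p) (hc : IsChain (· ≤ ·) (support x))
    {t : ℝ} {a p : P} (ha : convertedMass x t a < x a) (hp : convertedMass x t p ≠ 0) :
    a ≤ p := by
  rcases eq_or_ne a p with rfl | hne
  · exact le_rfl
  have hxa : x a ≠ 0 := (ha.trans_le' (convertedMass_nonneg h0 t a)).ne'
  refine (hc hxa (support_convertedMass_subset h0 t hp) hne).resolve_right fun hpa => ?_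
  exact hp (convertedMass_eq_zero_of_lt h0 (hpa.lt_of_ne hne.symm) ha)

lemma support_partialPush_subset (ψ : P → P) (t : ℝ) :
    support (partialPush ψ x t) ⊆
      {a | convertedMass x t a < x a} ∪ ψ '' support (convertedMass x t) := by
  intro a ha
  by_cases hlt : convertedMass x t a < x a
  · exact Or.inl hlt
  have heq : convertedMass x t a = x a := (convertedMass_le t a).antisymm (not_lt.mp hlt)
  refine Or.inr (support_push_subset ψ _ fun hpush => ha ?_)
  simp [partialPush, heq, hpush]

lemma partialPush_mem_orderComplex {ψ : P → P} (hψm : Monotone ψ) (hψ : ∀ p, p ≤ ψ p)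
    (hx : x ∈ orderComplex P) (t : ℝ) : partialPush ψ x t ∈ orderComplex P := by
  obtain ⟨h0, h1, hc⟩ := mem_orderComplex_iff.mp hx
  have hsum : ∑ a, partialPush ψ x t a = ∑ a, x a := by
    simp only [partialPush, Pi.add_apply, Pi.sub_apply, sum_add_distrib, sum_sub_distrib,
      sum_push]
    ring
  refine mem_orderComplex_iff.mpr ⟨fun a => ?_, hsum.trans h1, ?_⟩
  · exact add_nonneg (sub_nonneg.mpr (convertedMass_le t a))
      (push_nonneg ψ (convertedMass_nonneg h0 t) a)
  refine (isChain_union.mpr ⟨?_, ?_, ?_⟩).mono (support_partialPush_subset ψ t)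
  · exact hc.mono fun a ha => (ha.trans_le' (convertedMass_nonneg h0 t a)).ne'
  · exact hψm.isChain_image (hc.mono (support_convertedMass_subset h0 t))
  · rintro a ha _ ⟨p, hp, rfl⟩ -
    exact Or.inl ((le_of_convertedMass_lt_of_ne_zero h0 hc ha hp).trans (hψ p))

lemma partialPush_zero (ψ : P → P) (h0 : ∀ p, 0 ≤ x p) : partialPush ψ x 0 = x := by
  funext a
  simp [partialPush, convertedMass_zero h0, push]

lemma partialPush_one (ψ : P → P) (h0 : ∀ p, 0 ≤ x p) (h1 : ∑ p, x p = 1) :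
    partialPush ψ x 1 = push ψ x := by
  simp [partialPush, convertedMass_one h0 h1]

lemma continuous_partialPush (ψ : P → P) :
    Continuous fun z : ℝ × (P → ℝ) => partialPush ψ z.2 z.1 := by
  have hmass (p : P) : Continuous fun z : ℝ × (P → ℝ) => massAbove z.2 p :=
    continuous_finsetSum _ fun q _ => (continuous_apply q).comp continuous_snd
  have hconv : Continuous fun z : ℝ × (P → ℝ) => convertedMass z.2 z.1 :=
    continuous_pi fun p => ((continuous_apply p).comp continuous_snd).min
      (continuous_const.max (continuous_fst.sub (hmass p)))
  exact (continuous_snd.sub hconv).add ((continuous_push ψ).comp hconv)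

lemma pushMap_homotopic_id (ψ : P →o P) (hψ : ∀ p, p ≤ ψ p) :
    (pushMap ψ).Homotopic (ContinuousMap.id (orderComplex P)) := by
  refine ⟨ContinuousMap.Homotopy.symm
    { toFun := fun z => ⟨partialPush ψ z.2 z.1, partialPush_mem_orderComplex ψ.monotone hψ z.2.2 _⟩
      continuous_toFun := ((continuous_partialPush ψ).comp
        ((continuous_subtype_val.comp continuous_fst).prodMk
          (continuous_subtype_val.comp continuous_snd))).subtype_mk _
      map_zero_left := fun x => Subtype.ext ?_
      map_one_left := fun x => Subtype.ext ?_ }⟩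
  · exact partialPush_zero ψ (mem_orderComplex_iff.mp x.2).1
  · obtain ⟨h0, h1, -⟩ := mem_orderComplex_iff.mp x.2
    exact partialPush_one ψ h0 h1

end Homotopy

end OrderComplex

/-- an increasing operator `ψ` on a finite poset `P` induces a homotopy
equivalence between the order complex of `P` and that of the image of `ψ`. -/
theorem stmt13 (P : Type*) [PartialOrder P] [Finite P] (ψ : P →o P)
    (hψ : ∀ x, x ≤ ψ x) :
    Nonempty (ContinuousMap.HomotopyEquiv (orderComplex P)
      (orderComplex (Set.range (ψ : P → P)))) := by
  classical
  have : Fintype P := Fintype.ofFinite P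
  let corestrict : P →o Set.range ψ := ⟨Set.rangeFactorization ψ, fun _ _ h => ψ.monotone h⟩
  let incl : Set.range ψ →o P := OrderHom.Subtype.val _
  refine ⟨{ toFun := OrderComplex.pushMap corestrict, invFun := OrderComplex.pushMap incl,
            left_inv := ?_, right_inv := ?_ }⟩
  · rw [OrderComplex.pushMap_comp]
    exact OrderComplex.pushMap_homotopic_id ψ hψ
  · rw [OrderComplex.pushMap_comp]
    exact OrderComplex.pushMap_homotopic_id (corestrict.comp incl) fun q => hψ q
end
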